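/- Let {X_n}, {Y_n} be sequences of d-dimensional random vectors on a sublinear expectation space (Ω, H, Ê) such that Y_n is independent from X_n for every n. If there exist X, Y ∈ H^d with Ê[|X_n − X|] → 0 and Ê[|Y_n − Y|] → 0, then Y is independent from X. -/
import Mathlib


open Filter Topology

/-- A sublinear expectation on the space of all real-valued functions on `Ω`:
monotone, constant preserving, sub-additive and positively homogeneous. -/
structure SublinearExpectation (Ω : Type*) where
  E : (Ω → ℝ) → ℝ
  mono : ∀ X Y : Ω → ℝ, (∀ ω, X ω ≤ Y ω) → E X ≤ E Y
  const : ∀ c : ℝ, E (fun _ => c) = c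
  subadd : ∀ X Y : Ω → ℝ, E X - E Y ≤ E (fun ω => X ω - Y ω)
  poshom : ∀ lam : ℝ, 0 ≤ lam → ∀ X : Ω → ℝ, E (fun ω => lam * X ω) = lam * E X

/-- The Euclidean norm of a vector in `α → ℝ`. -/
noncomputable def euclNorm {α : Type*} [Fintype α] (x : α → ℝ) : ℝ :=
  Real.sqrt (∑ i, (x i) ^ 2)

/-- `Y` is independent from `X` under the sublinear expectation `E`:
`E[φ(X,Y)] = E[ x ↦ E[φ(x,Y)] evaluated at X ]` for all Lipschitz test functions `φ`. -/
def IsIndepFrom {Ω : Type*} (E : (Ω → ℝ) → ℝ) {α β : Type*} [Fintype α] [Fintype β]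
    (Y : Ω → α → ℝ) (X : Ω → β → ℝ) : Prop :=
  ∀ φ : (β → ℝ) × (α → ℝ) → ℝ, (∃ K : NNReal, LipschitzWith K φ) →
    E (fun ω => φ (X ω, Y ω)) = E (fun ω => E (fun ω' => φ (X ω, Y ω')))

/-- `X` and `X'` are identically distributed under the sublinear expectation `E`. -/
def IdenticallyDistributed {Ω : Type*} (E : (Ω → ℝ) → ℝ) {α : Type*} [Fintype α]
    (X X' : Ω → α → ℝ) : Prop :=
  ∀ φ : (α → ℝ) → ℝ, (∃ K : NNReal, LipschitzWith K φ) →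
    E (fun ω => φ (X ω)) = E (fun ω => φ (X' ω))

/-- A path `f : ℝ → α` is càdlàg on `[0, ∞)`: right continuous with left limits. -/
def Cadlag {α : Type*} [TopologicalSpace α] (f : ℝ → α) : Prop :=
  (∀ t : ℝ, 0 ≤ t → Filter.Tendsto f (nhdsWithin t (Set.Ici t)) (nhds (f t))) ∧
  (∀ t : ℝ, 0 < t → ∃ l, Filter.Tendsto f (nhdsWithin t (Set.Ico 0 t)) (nhds l))

/-- A Lévy process under a sublinear expectation: càdlàg paths, `X_0 = 0`,
increments `X_{t+s} − X_t` independent from `(X_{t_1}, …, X_{t_m})` for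
`0 ≤ t_1 ≤ ⋯ ≤ t_m ≤ t`, and `X_{t+s} − X_t` identically distributed as `X_s`. -/
def IsLevyProcess {Ω : Type*} (E : (Ω → ℝ) → ℝ) {α : Type*} [Fintype α]
    (X : ℝ → Ω → α → ℝ) : Prop :=
  (∀ ω, X 0 ω = 0) ∧
  (∀ ω, Cadlag fun t => X t ω) ∧
  (∀ t s : ℝ, 0 ≤ t → 0 < s → ∀ (m : ℕ) (ts : Fin m → ℝ), Monotone ts →
    (∀ i, 0 ≤ ts i ∧ ts i ≤ t) →
    IsIndepFrom E (fun ω i => X (t + s) ω i - X t ω i)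
      (fun ω (p : Fin m × α) => X (ts p.1) ω p.2)) ∧
  (∀ t s : ℝ, 0 ≤ t → 0 ≤ s →
    IdenticallyDistributed E (fun ω i => X (t + s) ω i - X t ω i) (X s))

section StmtAux
variable {Ω : Type*} (𝓔 : SublinearExpectation Ω)

lemma E_add_le (f g : Ω → ℝ) :
    𝓔.E (fun ω => f ω + g ω) ≤ 𝓔.E f + 𝓔.E g := by
  have h := 𝓔.subadd (fun ω => f ω + g ω) g
  simp only [add_sub_cancel_right] at h
  linarith

lemma E_abs_diff (W Z : Ω → ℝ) :
    |𝓔.E W - 𝓔.E Z| ≤ 𝓔.E (fun ω => |W ω - Z ω|) := by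
  rw [abs_sub_le_iff]
  constructor
  · exact le_trans (𝓔.subadd W Z) (𝓔.mono _ _ fun ω => le_abs_self _)
  · refine le_trans (𝓔.subadd Z W) (𝓔.mono _ _ fun ω => ?_)
    rw [abs_sub_comm]; exact le_abs_self _

lemma E_le_const (f : Ω → ℝ) (c : ℝ) (h : ∀ ω, f ω ≤ c) : 𝓔.E f ≤ c := by
  calc 𝓔.E f ≤ 𝓔.E (fun _ => c) := 𝓔.mono _ _ h
    _ = c := 𝓔.const c

lemma euclNorm_nonneg {α : Type*} [Fintype α] (x : α → ℝ) : 0 ≤ euclNorm x :=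
  Real.sqrt_nonneg _

lemma dist_le_euclNorm {d : ℕ} (x y : Fin d → ℝ) : dist x y ≤ euclNorm (x - y) := by
  rw [dist_pi_le_iff (euclNorm_nonneg _)]
  intro i
  rw [Real.dist_eq, ← Real.sqrt_sq_eq_abs]
  apply Real.sqrt_le_sqrt
  have := Finset.single_le_sum (f := fun j => ((x - y) j) ^ 2)
    (fun j _ => sq_nonneg _) (Finset.mem_univ i)
  simpa using this

end StmtAux

/-- If `Y_n` is independent from `X_n` for each `n`, `Ê[|X_n − X|] → 0` and
`Ê[|Y_n − Y|] → 0`, then `Y` is independent from `X`. -/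
theorem stmt14 {Ω : Type*} (𝓔 : SublinearExpectation Ω) {d : ℕ}
    (Xn Yn : ℕ → Ω → Fin d → ℝ) (X Y : Ω → Fin d → ℝ)
    (hind : ∀ n, IsIndepFrom 𝓔.E (Yn n) (Xn n))
    (hX : Filter.Tendsto (fun n => 𝓔.E fun ω => euclNorm (Xn n ω - X ω)) atTop (𝓝 0))
    (hY : Filter.Tendsto (fun n => 𝓔.E fun ω => euclNorm (Yn n ω - Y ω)) atTop (𝓝 0)) :
    IsIndepFrom 𝓔.E Y X := by
  intro φ hφ
  obtain ⟨K, hK⟩ := hφ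
  have hK0 : (0:ℝ) ≤ (K:ℝ) := K.coe_nonneg
  set a : ℕ → ℝ := fun n => 𝓔.E fun ω => euclNorm (Xn n ω - X ω) with ha
  set b : ℕ → ℝ := fun n => 𝓔.E fun ω => euclNorm (Yn n ω - Y ω) with hb
  set L : ℝ := 𝓔.E (fun ω => φ (X ω, Y ω)) with hL
  set R : ℝ := 𝓔.E (fun ω => 𝓔.E (fun ω' => φ (X ω, Y ω'))) with hR
  have lipφ : ∀ p q : (Fin d → ℝ) × (Fin d → ℝ), |φ p - φ q| ≤ K * dist p q := by
    intro p q
    have := hK.dist_le_mul p q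
    rwa [Real.dist_eq] at this
  have key : ∀ n, |L - R| ≤ (K * a n + K * b n) + (K * a n + K * b n) := by
    intro n
    have h1 : |L - 𝓔.E (fun ω => φ (Xn n ω, Yn n ω))| ≤ K * a n + K * b n := by
      refine le_trans (E_abs_diff 𝓔 _ _) ?_
      have hpt : ∀ ω, |φ (X ω, Y ω) - φ (Xn n ω, Yn n ω)| ≤
          K * euclNorm (Xn n ω - X ω) + K * euclNorm (Yn n ω - Y ω) := by
        intro ω
        refine le_trans (lipφ _ _) ?_
        rw [Prod.dist_eq]
        have h1' : dist (X ω) (Xn n ω) ≤ euclNorm (Xn n ω - X ω) := by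
          rw [dist_comm]; exact dist_le_euclNorm _ _
        have h2' : dist (Y ω) (Yn n ω) ≤ euclNorm (Yn n ω - Y ω) := by
          rw [dist_comm]; exact dist_le_euclNorm _ _
        have hnn1 := euclNorm_nonneg (Xn n ω - X ω)
        have hnn2 := euclNorm_nonneg (Yn n ω - Y ω)
        have hmax : max (dist (X ω) (Xn n ω)) (dist (Y ω) (Yn n ω)) ≤
            euclNorm (Xn n ω - X ω) + euclNorm (Yn n ω - Y ω) := by
          apply max_le <;> linarith
        calc (K:ℝ) * max (dist (X ω) (Xn n ω)) (dist (Y ω) (Yn n ω))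
            ≤ K * (euclNorm (Xn n ω - X ω) + euclNorm (Yn n ω - Y ω)) :=
              mul_le_mul_of_nonneg_left hmax hK0
          _ = K * euclNorm (Xn n ω - X ω) + K * euclNorm (Yn n ω - Y ω) := by ring
      calc 𝓔.E (fun ω => |φ (X ω, Y ω) - φ (Xn n ω, Yn n ω)|)
          ≤ 𝓔.E (fun ω => K * euclNorm (Xn n ω - X ω) + K * euclNorm (Yn n ω - Y ω)) :=
            𝓔.mono _ _ hpt
        _ ≤ 𝓔.E (fun ω => K * euclNorm (Xn n ω - X ω)) +
            𝓔.E (fun ω => K * euclNorm (Yn n ω - Y ω)) := E_add_le 𝓔 _ _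
        _ = K * a n + K * b n := by
            rw [𝓔.poshom _ hK0, 𝓔.poshom _ hK0]
    have h2 : 𝓔.E (fun ω => φ (Xn n ω, Yn n ω)) =
        𝓔.E (fun ω => 𝓔.E (fun ω' => φ (Xn n ω, Yn n ω'))) := hind n φ ⟨K, hK⟩
    have h3 : |𝓔.E (fun ω => 𝓔.E (fun ω' => φ (Xn n ω, Yn n ω'))) -
        𝓔.E (fun ω => 𝓔.E (fun ω' => φ (X ω, Yn n ω')))| ≤ K * a n := by
      refine le_trans (E_abs_diff 𝓔 _ _) ?_
      have hpt : ∀ ω, |𝓔.E (fun ω' => φ (Xn n ω, Yn n ω')) -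
          𝓔.E (fun ω' => φ (X ω, Yn n ω'))| ≤ K * euclNorm (Xn n ω - X ω) := by
        intro ω
        refine le_trans (E_abs_diff 𝓔 _ _) (E_le_const 𝓔 _ _ ?_)
        intro ω'
        refine le_trans (lipφ _ _) ?_
        rw [Prod.dist_eq]
        have : max (dist (Xn n ω) (X ω)) (dist (Yn n ω') (Yn n ω')) =
            dist (Xn n ω) (X ω) := by simp [dist_nonneg]
        rw [this]
        exact mul_le_mul_of_nonneg_left (dist_le_euclNorm _ _) hK0
      calc 𝓔.E _ ≤ 𝓔.E (fun ω => K * euclNorm (Xn n ω - X ω)) := 𝓔.mono _ _ hpt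
        _ = K * a n := 𝓔.poshom _ hK0 _
    have h4 : |𝓔.E (fun ω => 𝓔.E (fun ω' => φ (X ω, Yn n ω'))) - R| ≤ K * b n := by
      refine le_trans (E_abs_diff 𝓔 _ _) (E_le_const 𝓔 _ _ ?_)
      intro ω
      refine le_trans (E_abs_diff 𝓔 _ _) ?_
      have hpt : ∀ ω', |φ (X ω, Yn n ω') - φ (X ω, Y ω')| ≤
          K * euclNorm (Yn n ω' - Y ω') := by
        intro ω'
        refine le_trans (lipφ _ _) ?_
        rw [Prod.dist_eq]
        have : max (dist (X ω) (X ω)) (dist (Yn n ω') (Y ω')) =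
            dist (Yn n ω') (Y ω') := by simp [dist_nonneg]
        rw [this]
        exact mul_le_mul_of_nonneg_left (dist_le_euclNorm _ _) hK0
      calc 𝓔.E _ ≤ 𝓔.E (fun ω' => K * euclNorm (Yn n ω' - Y ω')) := 𝓔.mono _ _ hpt
        _ = K * b n := 𝓔.poshom _ hK0 _
    calc |L - R| ≤ |L - 𝓔.E (fun ω => φ (Xn n ω, Yn n ω))| +
          |𝓔.E (fun ω => φ (Xn n ω, Yn n ω)) - R| := abs_sub_le _ _ _
      _ = |L - 𝓔.E (fun ω => φ (Xn n ω, Yn n ω))| +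
          |𝓔.E (fun ω => 𝓔.E (fun ω' => φ (Xn n ω, Yn n ω'))) - R| := by rw [h2]
      _ ≤ |L - 𝓔.E (fun ω => φ (Xn n ω, Yn n ω))| +
          (|𝓔.E (fun ω => 𝓔.E (fun ω' => φ (Xn n ω, Yn n ω'))) -
            𝓔.E (fun ω => 𝓔.E (fun ω' => φ (X ω, Yn n ω')))| +
           |𝓔.E (fun ω => 𝓔.E (fun ω' => φ (X ω, Yn n ω'))) - R|) := by
            gcongr; exact abs_sub_le _ _ _
      _ ≤ (K * a n + K * b n) + (K * a n + K * b n) := by linarith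
  have hlim : Tendsto (fun n => (K * a n + K * b n) + (K * a n + K * b n))
      atTop (𝓝 0) := by
    have h1 := (hX.const_mul (K:ℝ)).add (hY.const_mul (K:ℝ))
    have h2 := h1.add h1
    simpa using h2
  have hle : |L - R| ≤ 0 := ge_of_tendsto' hlim key
  have : L - R = 0 := abs_eq_zero.mp (le_antisymm hle (abs_nonneg _))
  linarith [this]
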